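/- Let X be a metric space, H an infinite-dimensional separable complex Hilbert space, and n a positive integer. Then there exists an isometry W on ℓ²(X; Hⁿ), where Hⁿ denotes the Hilbert space of n-tuples (Fin n → H), such that W has propagation 0 (its entries W_{x,y} : Hⁿ → Hⁿ vanish whenever x ≠ y) and W∘W* equals the orthogonal projection P acting fiberwise by P(v₁, v₂, …, vₙ) = (v₁, 0, …, 0); that is, (W∘W*)(f)(x) = (f(x)₁, 0, …, 0) for every f ∈ ℓ²(X; Hⁿ) and x ∈ X. (This expresses that the Roe algebra of X is quasi-stable.) -/

import Mathlib

/-- `ℓ²(X; H)`: square-summable functions from `X` to `H`. -/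
noncomputable abbrev ellTwo (X : Type) (H : Type) [NormedAddCommGroup H] :=
  lp (fun _ : X => H) 2

/-- The Hilbert space `Hⁿ` of `n`-tuples, `PiLp 2 (Fin n → H)`, is complete. -/
instance piLp_fin_completeSpace {H : Type} [NormedAddCommGroup H] [CompleteSpace H]
    (n : ℕ) : CompleteSpace (PiLp 2 (fun _ : Fin n => H)) :=
  inferInstance

/-!
A separable infinite-dimensional Hilbert space `H` has a Hilbert basis indexed by `ℕ` (an
orthonormal family is `√2`-separated, hence countable), so `Hⁿ` has one indexed by
`Σ _ : Fin n, ℕ`, again a copy of `ℕ`; hence there is a unitary `U : Hⁿ ≃ H`. Composing `U` with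
the inclusion `ι₀` of `H` as the first coordinate of `Hⁿ` gives an isometry `J` of `Hⁿ` with
`J J* = ι₀ ι₀*`, the projection onto the first coordinate. Applying `J` pointwise on `ℓ²(X; Hⁿ)`
gives `W`: it has propagation `0`, and its adjoint is `J*` applied pointwise.
-/

open Submodule ContinuousLinearMap
open scoped InnerProductSpace ENNReal

namespace PiLp

variable {𝕜 ι : Type*} [RCLike 𝕜] [Fintype ι] [DecidableEq ι] {β : ι → Type*}
  [∀ i, NormedAddCommGroup (β i)] [∀ i, InnerProductSpace 𝕜 (β i)]

theorem inner_single_left (i : ι) (a : β i) (v : PiLp 2 β) :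
    ⟪single 2 i a, v⟫_𝕜 = ⟪a, v i⟫_𝕜 := by
  rw [inner_apply, Fintype.sum_eq_single i fun j hj => by simp [Pi.single_eq_of_ne hj]]
  simp

theorem inner_single_right (i : ι) (a : β i) (v : PiLp 2 β) :
    ⟪v, single 2 i a⟫_𝕜 = ⟪v i, a⟫_𝕜 := by
  rw [← inner_conj_symm, inner_single_left, inner_conj_symm]

variable (𝕜 β) in
def singleₗᵢ (p : ℝ≥0∞) [Fact (1 ≤ p)] (i : ι) : β i →ₗᵢ[𝕜] PiLp p β where
  toFun := single p i
  map_add' _ _ := single_add p i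
  map_smul' c a := by simp_rw [← toLp_single, Pi.single_smul, WithLp.toLp_smul]; rfl
  norm_map' := norm_single p β i

@[simp]
theorem singleₗᵢ_apply (p : ℝ≥0∞) [Fact (1 ≤ p)] (i : ι) (a : β i) :
    singleₗᵢ 𝕜 β p i a = single p i a := rfl

theorem adjoint_singleₗᵢ [∀ i, CompleteSpace (β i)] (i : ι) :
    adjoint (singleₗᵢ 𝕜 β 2 i).toContinuousLinearMap = proj 2 β i := by
  refine ((eq_adjoint_iff _ _).2 fun v a => ?_).symm
  simp [inner_single_right]

end PiLp

section HilbertBasis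

variable {𝕜 E : Type*} [RCLike 𝕜] [NormedAddCommGroup E] [InnerProductSpace 𝕜 E]

theorem Orthonormal.dist_eq_sqrt_two {ι : Type*} {v : ι → E} (hv : Orthonormal 𝕜 v) {i j : ι}
    (hij : i ≠ j) : dist (v i) (v j) = √2 := by
  have hsq : ‖v i - v j‖ ^ 2 = 2 := by
    rw [@norm_sub_sq 𝕜, hv.2 hij, hv.1 i, hv.1 j]
    norm_num
  rw [dist_eq_norm, ← hsq, Real.sqrt_sq (norm_nonneg _)]

theorem Orthonormal.countable [TopologicalSpace.SeparableSpace E] {ι : Type*} {v : ι → E}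
    (hv : Orthonormal 𝕜 v) : Countable ι := by
  refine Pairwise.countable_of_isOpen_disjoint (s := fun i => Metric.ball (v i) (1 / 2))
    (fun i j hij => Metric.ball_disjoint_ball ?_) (fun _ => Metric.isOpen_ball)
    (fun i => ⟨v i, by simp⟩)
  rw [hv.dist_eq_sqrt_two hij]
  linarith [Real.one_lt_sqrt_two]

theorem HilbertBasis.finiteDimensional_of_finite {ι : Type*} [Finite ι]
    (b : HilbertBasis ι 𝕜 E) : FiniteDimensional 𝕜 E :=
  have := Fintype.ofFinite ι
  b.toOrthonormalBasis.toBasis.finiteDimensional_of_finite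

variable [CompleteSpace E]

protected noncomputable def HilbertBasis.reindex {ι ι' : Type*} (b : HilbertBasis ι 𝕜 E)
    (e : ι ≃ ι') : HilbertBasis ι' 𝕜 E :=
  HilbertBasis.mk (b.orthonormal.comp e.symm e.symm.injective)
    (by rw [Set.range_comp, e.symm.range_eq_univ, Set.image_univ]; exact b.dense_span.ge)

theorem nonempty_hilbertBasis_nat [TopologicalSpace.SeparableSpace E]
    (hinf : ¬ FiniteDimensional 𝕜 E) : Nonempty (HilbertBasis ℕ 𝕜 E) := by
  obtain ⟨w, b, -⟩ := exists_hilbertBasis 𝕜 E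
  have : Countable w := b.orthonormal.countable
  have : Infinite w := not_finite_iff_infinite.1 fun _ => hinf b.finiteDimensional_of_finite
  obtain ⟨_⟩ := nonempty_denumerable w
  exact ⟨b.reindex (Denumerable.eqv w)⟩

protected noncomputable def HilbertBasis.piLp {ι : Type*} [Fintype ι] [DecidableEq ι]
    {κ β : ι → Type*} [∀ i, NormedAddCommGroup (β i)] [∀ i, InnerProductSpace 𝕜 (β i)]
    [∀ i, CompleteSpace (β i)] (b : ∀ i, HilbertBasis (κ i) 𝕜 (β i)) :
    HilbertBasis (Σ i, κ i) 𝕜 (PiLp 2 β) :=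
  HilbertBasis.mkOfOrthogonalEqBot (v := fun k => PiLp.single 2 k.1 (b k.1 k.2))
    ⟨fun k => by simpa using (b k.1).orthonormal.1 k.2, by
      rintro ⟨i, k⟩ ⟨j, l⟩ hne
      rw [PiLp.inner_single_left]
      obtain rfl | hij := eq_or_ne i j
      · simpa using (b i).orthonormal.2 fun h : k = l => hne (h ▸ rfl)
      · simp [hij]⟩
    (by
      refine (Submodule.eq_bot_iff _).2 fun x hx => PiLp.ext fun i => ?_
      refine (b i).repr.map_eq_zero_iff.1 (lp.ext <| funext fun k => ?_)
      have hik := inner_right_of_mem_orthogonal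
        (subset_span (Set.mem_range_self (⟨i, k⟩ : Σ i, κ i))) hx
      simpa [HilbertBasis.repr_apply_apply, PiLp.inner_single_left] using hik)

theorem nonempty_piLp_linearIsometryEquiv [TopologicalSpace.SeparableSpace E]
    (hinf : ¬ FiniteDimensional 𝕜 E) (ι : Type*) [Fintype ι] [Nonempty ι] :
    Nonempty (PiLp 2 (fun _ : ι => E) ≃ₗᵢ[𝕜] E) := by
  classical
  obtain ⟨b⟩ := nonempty_hilbertBasis_nat hinf
  obtain ⟨_⟩ := nonempty_denumerable (Σ _ : ι, ℕ)
  exact ⟨((HilbertBasis.piLp fun _ => b).reindex (Denumerable.eqv _)).repr.trans b.repr.symm⟩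

end HilbertBasis

namespace lp

section map

variable {𝕜 X E F G : Type*} [RCLike 𝕜] [NormedAddCommGroup E] [NormedSpace 𝕜 E]
  [NormedAddCommGroup F] [NormedSpace 𝕜 F] [NormedAddCommGroup G] [NormedSpace 𝕜 G]
  {p : ℝ≥0∞}

theorem memℓp_comp (T : E →L[𝕜] F) (f : lp (fun _ : X => E) p) :
    Memℓp (fun x => T (f x)) p :=
  ((lp.memℓp f).norm.const_mul ‖T‖).mono fun x => T.le_opNorm (f x)

variable [Fact (1 ≤ p)]

protected noncomputable def map (T : E →L[𝕜] F) :
    lp (fun _ : X => E) p →L[𝕜] lp (fun _ : X => F) p :=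
  LinearMap.mkContinuous
    { toFun f := ⟨fun x => T (f x), memℓp_comp T f⟩
      map_add' f g := by ext x; exact T.map_add _ _
      map_smul' c f := by ext x; simp }
    ‖T‖ fun f => by
      calc _ ≤ ‖(‖T‖ : 𝕜) • f‖ :=
            lp.norm_mono (zero_lt_one.trans_le Fact.out).ne' fun x => by
              simpa [norm_smul] using T.le_opNorm (f x)
        _ = ‖T‖ * ‖f‖ := by
            rw [lp.norm_const_smul (zero_lt_one.trans_le Fact.out).ne', RCLike.norm_ofReal,
              abs_norm]

@[simp]
theorem map_apply (T : E →L[𝕜] F) (f : lp (fun _ : X => E) p) (x : X) :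
    lp.map T f x = T (f x) := rfl

theorem map_comp (S : F →L[𝕜] G) (T : E →L[𝕜] F) :
    (lp.map (S ∘L T) : lp (fun _ : X => E) p →L[𝕜] _) = lp.map S ∘L lp.map T := rfl

theorem map_id : (lp.map (.id 𝕜 E) : lp (fun _ : X => E) p →L[𝕜] _) = .id 𝕜 _ := rfl

theorem map_single_apply_of_ne [DecidableEq X] (T : E →L[𝕜] F) {x y : X} (hxy : x ≠ y)
    (v : E) : lp.map T (lp.single p y v) x = 0 := by
  simp [Pi.single_eq_of_ne hxy]

end map

theorem adjoint_map {𝕜 X E F : Type*} [RCLike 𝕜] [NormedAddCommGroup E] [InnerProductSpace 𝕜 E]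
    [CompleteSpace E] [NormedAddCommGroup F] [InnerProductSpace 𝕜 F] [CompleteSpace F]
    (T : E →L[𝕜] F) :
    adjoint (lp.map T : lp (fun _ : X => E) 2 →L[𝕜] _) = lp.map (adjoint T) := by
  refine ((eq_adjoint_iff _ _).2 fun f g => ?_).symm
  simp only [lp.inner_eq_tsum, map_apply, adjoint_inner_left]

end lp

theorem roe_quasi_stable_general
    (X : Type) [DecidableEq X]
    (H : Type) [NormedAddCommGroup H] [InnerProductSpace ℂ H] [CompleteSpace H]
    [TopologicalSpace.SeparableSpace H] (hinf : ¬ FiniteDimensional ℂ H)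
    (n : ℕ) (hn : 0 < n) :
    ∃ W : ellTwo X (PiLp 2 (fun _ : Fin n => H)) →L[ℂ]
        ellTwo X (PiLp 2 (fun _ : Fin n => H)),
      -- `W` is an isometry
      (ContinuousLinearMap.adjoint W).comp W =
        ContinuousLinearMap.id ℂ (ellTwo X (PiLp 2 (fun _ : Fin n => H))) ∧
      -- `W` has propagation `0`
      (∀ x y : X, x ≠ y → ∀ v : PiLp 2 (fun _ : Fin n => H),
        W (lp.single 2 y v) x = 0) ∧
      -- `W W*` is the fiberwise projection onto the first coordinate
      (∀ (f : ellTwo X (PiLp 2 (fun _ : Fin n => H))) (x : X) (i : Fin n),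
        (W.comp (ContinuousLinearMap.adjoint W)) f x i =
          if i = (⟨0, hn⟩ : Fin n) then f x (⟨0, hn⟩ : Fin n) else 0) := by
  have : Nonempty (Fin n) := ⟨⟨0, hn⟩⟩
  obtain ⟨U⟩ := nonempty_piLp_linearIsometryEquiv hinf (Fin n)
  let ι₀ := PiLp.singleₗᵢ ℂ (fun _ : Fin n => H) 2 ⟨0, hn⟩
  let J := ι₀.comp U.toLinearIsometry
  have hJ_adjoint : adjoint J.toContinuousLinearMap = U.symm ∘L PiLp.proj 2 _ ⟨0, hn⟩ := by
    rw [show J.toContinuousLinearMap = ι₀.toContinuousLinearMap ∘L U from rfl, adjoint_comp,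
      PiLp.adjoint_singleₗᵢ (𝕜 := ℂ) (β := fun _ : Fin n => H), U.adjoint_eq_symm]
  refine ⟨lp.map J.toContinuousLinearMap, ?_,
    fun x y hxy v => lp.map_single_apply_of_ne _ hxy v, fun f x i => ?_⟩
  · rw [lp.adjoint_map, ← lp.map_comp, J.adjoint_comp_self]
    exact lp.map_id
  · simp [lp.adjoint_map, hJ_adjoint, J, ι₀]

/-- Quasi-stability of the Roe algebra: for every `n ≥ 1` there is an isometry `W` on
`ℓ²(X; Hⁿ)` of propagation `0` with `W W*` equal to the fiberwise orthogonal projection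
onto the first coordinate. -/
theorem roe_quasi_stable
    (X : Type) [MetricSpace X] [DecidableEq X]
    (H : Type) [NormedAddCommGroup H] [InnerProductSpace ℂ H] [CompleteSpace H]
    [TopologicalSpace.SeparableSpace H] (hinf : ¬ FiniteDimensional ℂ H)
    (n : ℕ) (hn : 0 < n) :
    ∃ W : ellTwo X (PiLp 2 (fun _ : Fin n => H)) →L[ℂ]
        ellTwo X (PiLp 2 (fun _ : Fin n => H)),
      -- `W` is an isometry
      (ContinuousLinearMap.adjoint W).comp W =
        ContinuousLinearMap.id ℂ (ellTwo X (PiLp 2 (fun _ : Fin n => H))) ∧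
      -- `W` has propagation `0`
      (∀ x y : X, x ≠ y → ∀ v : PiLp 2 (fun _ : Fin n => H),
        W (lp.single 2 y v) x = 0) ∧
      -- `W W*` is the fiberwise projection onto the first coordinate
      (∀ (f : ellTwo X (PiLp 2 (fun _ : Fin n => H))) (x : X) (i : Fin n),
        (W.comp (ContinuousLinearMap.adjoint W)) f x i =
          if i = (⟨0, hn⟩ : Fin n) then f x (⟨0, hn⟩ : Fin n) else 0) :=
  roe_quasi_stable_general X H hinf n hn
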